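/- Let L₂, L₀, M be real symmetric n×n matrices, L₁ a real antisymmetric n×n matrix, k, ω ∈ ℝ, and let u, u' ∈ ℂⁿ satisfy W(k,ω)u = 0 and (2ikL₂ + L₁)u + W(k,ω)u' = 0. Then uᴴ(2ikL₂ + L₁)u = 0, i.e. the zero-group-velocity condition uᴴ iW'(k) u = 0 holds. -/
import Mathlib


open Matrix

namespace ZGV14

variable {n : ℕ}

/-- A real matrix regarded as a complex matrix. -/
def toC (A : Matrix (Fin n) (Fin n) ℝ) : Matrix (Fin n) (Fin n) ℂ :=
  A.map Complex.ofReal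

/-- `W(k, ω) = (ik)²L₂ + ikL₁ + L₀ + ω²M`. -/
noncomputable def W (L2 L1 L0 M : Matrix (Fin n) (Fin n) ℝ) (k ω : ℝ) :
    Matrix (Fin n) (Fin n) ℂ :=
  (Complex.I * k) ^ 2 • toC L2 + (Complex.I * k) • toC L1 + toC L0
    + ((ω : ℂ) ^ 2) • toC M

/-- `W'(k) = 2ikL₂ + L₁`. -/
noncomputable def W' (L2 L1 : Matrix (Fin n) (Fin n) ℝ) (k : ℝ) :
    Matrix (Fin n) (Fin n) ℂ :=
  (2 * (Complex.I * k)) • toC L2 + toC L1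

lemma toC_conjTranspose (A : Matrix (Fin n) (Fin n) ℝ) : (toC A)ᴴ = toC Aᵀ := by
  ext i j
  simp [toC, conjTranspose_apply]

lemma toC_neg (A : Matrix (Fin n) (Fin n) ℝ) : toC (-A) = -toC A := by
  ext i j
  simp [toC]

/-- If `W(k,ω)u = 0` and `(2ikL₂ + L₁)u + W(k,ω)u' = 0`, then
`uᴴ(2ikL₂ + L₁)u = 0`, i.e. the ZGV condition `uᴴ iW'(k) u = 0` holds. -/
theorem zgv_condition_of_exceptional_mode
    (n : ℕ) (hn : 1 ≤ n) (L2 L1 L0 M : Matrix (Fin n) (Fin n) ℝ)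
    (hL2 : L2.IsSymm) (hL0 : L0.IsSymm) (hM : M.IsSymm) (hL1 : L1ᵀ = -L1)
    (k ω : ℝ) (u u' : Fin n → ℂ)
    (hWu : W L2 L1 L0 M k ω *ᵥ u = 0)
    (h2 : W' L2 L1 k *ᵥ u + W L2 L1 L0 M k ω *ᵥ u' = 0) :
    star u ⬝ᵥ (W' L2 L1 k *ᵥ u) = 0 ∧
      star u ⬝ᵥ ((Complex.I • W' L2 L1 k) *ᵥ u) = 0 := by
  have hWH : (W L2 L1 L0 M k ω)ᴴ = W L2 L1 L0 M k ω := by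
    unfold W
    simp only [conjTranspose_add, conjTranspose_smul, toC_conjTranspose,
      hL2.eq, hL0.eq, hM.eq, hL1, toC_neg]
    have h1 : star ((Complex.I * (k : ℂ)) ^ 2) = (Complex.I * (k : ℂ)) ^ 2 := by
      simp only [Complex.star_def, map_pow, _root_.map_mul, Complex.conj_I,
        Complex.conj_ofReal]
      ring
    have h2 : star ((ω : ℂ) ^ 2) = ((ω : ℂ)) ^ 2 := by
      simp [Complex.star_def, Complex.conj_ofReal]
    have h3 : star (Complex.I * (k : ℂ)) = -(Complex.I * (k : ℂ)) := by
      simp only [Complex.star_def, _root_.map_mul, Complex.conj_I,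
        Complex.conj_ofReal]
      ring
    rw [h1, h2, h3]
    simp
  have key : star u ⬝ᵥ (W L2 L1 L0 M k ω *ᵥ u') = 0 := by
    rw [dotProduct_mulVec, ← hWH, ← star_mulVec, hWu]
    simp
  have h1 : star u ⬝ᵥ (W' L2 L1 k *ᵥ u) = 0 := by
    have := congrArg (fun v => star u ⬝ᵥ v) h2
    simpa [mulVec_add, dotProduct_add, key] using this
  refine ⟨h1, ?_⟩
  rw [smul_mulVec, dotProduct_smul, h1, smul_zero]

end ZGV14
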